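/- Let ε ∈ (0,1), α ∈ (0, π−ε], e ∈ S^d, and let ρ_α and ρ_{α/8} denote the boundary-adapted metrics on B(e,α) and B(e,α/8) respectively, where ρ_β(x,y) = (1/β)·√(d(x,y)² + β·(√(β−d(x,e)) − √(β−d(y,e)))²). Let T(η sin θ, cos θ) = (η sin 8θ, cos 8θ) map B(e,α/8) onto B(e,α). Then there is a constant C₅ ≥ 1 depending only on d and ε such that for all x, y ∈ B(e, α/8), C₅⁻¹·ρ_{α/8}(x,y) ≤ ρ_α(Tx, Ty) ≤ C₅·ρ_{α/8}(x,y). -/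

import Mathlib

open RealInnerProductSpace

/-- The geodesic distance on the unit sphere of `EuclideanSpace ℝ (Fin (d+1))`. -/
noncomputable def geo {d : ℕ} (x y : EuclideanSpace ℝ (Fin (d+1))) : ℝ :=
  Real.arccos ⟪x, y⟫

/-- The boundary-adapted metric on the spherical cap B(e,β). -/
noncomputable def rhoCap {d : ℕ} (e : EuclideanSpace ℝ (Fin (d+1))) (β : ℝ)
    (x y : EuclideanSpace ℝ (Fin (d+1))) : ℝ :=
  (1/β) * Real.sqrt ((geo x y)^2 +
    β * (Real.sqrt (β - geo x e) - Real.sqrt (β - geo y e))^2)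

/-- The dilation map T(η sin θ, cos θ) = (η sin 8θ, cos 8θ), written intrinsically. -/
noncomputable def Tmap {d : ℕ} (e x : EuclideanSpace ℝ (Fin (d+1))) :
    EuclideanSpace ℝ (Fin (d+1)) :=
  Real.cos (8 * geo x e) • e +
    (Real.sin (8 * geo x e) / Real.sin (geo x e)) • (x - Real.cos (geo x e) • e)

/-!
In polar coordinates about `e` a unit vector is `x = cos θ • e + sin θ • u` with `u ⟂ e`, and `T`
multiplies the colatitude `θ` by `8` keeping the direction `u`. By the spherical law of cosines
`cos d(x,y)` and `cos d(Tx,Ty)` are the same expression in `(θ, t, ⟪u, v⟫)`, resp. `(8θ, 8t, ⟪u, v⟫)`;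
comparing it term by term with `|sin 8θ| ≤ 8 |sin θ|` and Jordan's inequality (which is where
`8θ ≤ π - ε` enters) gives `ε² (1 - cos d(x,y)) ≤ 1 - cos d(Tx,Ty) ≤ 64 (1 - cos d(x,y))`. As
`1 - cos s ≍ s²` on `[0, π]`, this makes `d(Tx,Ty) ≍ d(x,y)`, while the boundary terms of the two
metrics agree up to the factor `√8` because `α - 8θ = 8 (α/8 - θ)`. The constant is `C₅ = 4π/ε`.
-/

open Real

lemma abs_sin_nat_mul_le (n : ℕ) (x : ℝ) : |sin (n * x)| ≤ n * |sin x| := by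
  induction n with
  | zero => simp
  | succ n ih =>
    calc |sin ((↑(n + 1) : ℝ) * x)| = |sin (n * x) * cos x + cos (n * x) * sin x| := by
          rw [← sin_add]; push_cast; ring_nf
      _ ≤ |sin (n * x)| * |cos x| + |cos (n * x)| * |sin x| := by
          rw [← abs_mul, ← abs_mul]; exact abs_add_le _ _
      _ ≤ n * |sin x| * 1 + 1 * |sin x| := by
          gcongr
          exacts [abs_cos_le_one _, abs_cos_le_one _]
      _ = (↑(n + 1) : ℝ) * |sin x| := by push_cast; ring

lemma one_sub_cos_nat_mul_le (n : ℕ) (s : ℝ) : 1 - cos (n * s) ≤ n ^ 2 * (1 - cos s) := by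
  have half (u : ℝ) : 1 - cos u = 2 * sin (u / 2) ^ 2 := by
    rw [← mul_div_cancel₀ u two_ne_zero, cos_two_mul_eq_one_sub,
      mul_div_cancel_left₀ _ two_ne_zero]
    ring
  have hsq : sin (n * (s / 2)) ^ 2 ≤ (n * |sin (s / 2)|) ^ 2 := by
    rw [← sq_abs]; gcongr; exact abs_sin_nat_mul_le n _
  rw [half, half, mul_div_assoc]
  nlinarith [sq_abs (sin (s / 2))]

lemma sin_eight_mul_le {θ : ℝ} (hθ : 0 ≤ sin θ) : sin (8 * θ) ≤ 8 * sin θ := by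
  simpa [abs_of_nonneg hθ] using (le_abs_self _).trans (abs_sin_nat_mul_le 8 θ)

/-- Jordan's inequality `sin s ≥ 2s/π` applied to `8θ` or to `π - 8θ ≥ ε`. -/
lemma mul_sin_le_sin_eight_mul {ε θ : ℝ} (hε : 0 ≤ ε) (hε1 : ε ≤ 1) (hθ : 0 ≤ θ)
    (hθε : 8 * θ ≤ π - ε) : ε * sin θ ≤ sin (8 * θ) := by
  have hπ3 := pi_gt_three
  have hπ4 := pi_lt_four
  have hsin : ε * sin θ ≤ ε * θ := mul_le_mul_of_nonneg_left (sin_le hθ) hε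
  have hεθ : ε * θ ≤ θ := mul_le_of_le_one_left hθ hε1
  rcases le_or_gt (8 * θ) (π / 2) with h | h
  · have hjordan := mul_le_sin (by linarith) h
    have : ε * θ ≤ 2 / π * (8 * θ) := by
      rw [div_mul_eq_mul_div, le_div_iff₀ pi_pos]
      nlinarith [mul_le_mul_of_nonneg_right hεθ pi_pos.le]
    linarith
  · have hjordan := mul_le_sin (x := π - 8 * θ) (by linarith) (by linarith)
    rw [sin_pi_sub] at hjordan
    have hθπ : θ * π ≤ 2 := by nlinarith
    have : ε * θ ≤ 2 / π * (π - 8 * θ) := by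
      rw [div_mul_eq_mul_div, le_div_iff₀ pi_pos]
      nlinarith [mul_le_mul_of_nonneg_left hθπ hε]
    linarith

lemma le_pi_div_two_mul_of_one_sub_cos_le {a b k : ℝ} (ha : 0 ≤ a) (haπ : a ≤ π) (hb : 0 ≤ b)
    (hk : 0 ≤ k) (h : 1 - cos a ≤ k ^ 2 * (1 - cos b)) : a ≤ π / 2 * k * b := by
  have hcos_a := cos_le_one_sub_mul_cos_sq (x := a) (by rwa [abs_of_nonneg ha])
  have hcos_b := one_sub_sq_div_two_le_cos (x := b)
  have hsq : a ^ 2 ≤ (π / 2 * k * b) ^ 2 := by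
    have := mul_le_mul_of_nonneg_left hcos_b (sq_nonneg k)
    have : 2 / π ^ 2 * a ^ 2 ≤ k ^ 2 * b ^ 2 / 2 := by nlinarith
    rw [div_mul_eq_mul_div, div_le_iff₀ (by positivity)] at this
    nlinarith
  exact abs_le_of_sq_le_sq' hsq (by positivity) |>.2

lemma sqrt_sub_eight_mul (α θ : ℝ) : √(α - 8 * θ) = √8 * √(α / 8 - θ) := by
  rw [← sqrt_mul (by norm_num)]; ring_nf

lemma sqrt_sq_add_le_mul_sqrt_sq_add {a b c K : ℝ} (hK : 1 ≤ K) (ha : 0 ≤ a) (hc : 0 ≤ c)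
    (h : a ≤ K * b) : √(a ^ 2 + c) ≤ K * √(b ^ 2 + c) := by
  rw [← sqrt_sq (by linarith : 0 ≤ K), ← sqrt_mul (sq_nonneg K)]
  apply sqrt_le_sqrt
  have : a ^ 2 ≤ (K * b) ^ 2 := pow_le_pow_left₀ ha h 2
  nlinarith [mul_le_mul_of_nonneg_right (one_le_pow₀ hK : 1 ≤ K ^ 2) hc]

/-- Spherical law of cosines: the inner product of two unit vectors at colatitudes `θ`, `t` from a
pole whose horizontal directions have inner product `c`. -/
noncomputable def polarInner (θ t c : ℝ) : ℝ := cos θ * cos t + sin θ * sin t * c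

lemma one_sub_polarInner (θ t c : ℝ) :
    1 - polarInner θ t c = (1 - cos (θ - t)) + sin θ * sin t * (1 - c) := by
  rw [polarInner, cos_sub]; ring

lemma one_sub_polarInner_eight_mul_le {θ t c : ℝ} (hθ : 0 ≤ θ) (hθπ : 8 * θ ≤ π) (ht : 0 ≤ t)
    (htπ : 8 * t ≤ π) (hc : c ≤ 1) :
    1 - polarInner (8 * θ) (8 * t) c ≤ 64 * (1 - polarInner θ t c) := by
  have hsinθ : 0 ≤ sin θ := sin_nonneg_of_nonneg_of_le_pi hθ (by linarith)
  have hsint : 0 ≤ sin t := sin_nonneg_of_nonneg_of_le_pi ht (by linarith)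
  have hdiff : 1 - cos (8 * θ - 8 * t) ≤ 64 * (1 - cos (θ - t)) := by
    have := one_sub_cos_nat_mul_le 8 (θ - t)
    push_cast at this; rw [mul_sub] at this; linarith
  have hsin : sin (8 * θ) * sin (8 * t) ≤ 64 * (sin θ * sin t) := by
    have := mul_le_mul (sin_eight_mul_le hsinθ) (sin_eight_mul_le hsint)
      (sin_nonneg_of_nonneg_of_le_pi (by linarith) htπ) (by linarith)
    linarith
  rw [one_sub_polarInner, one_sub_polarInner]
  nlinarith [mul_le_mul_of_nonneg_right hsin (sub_nonneg.2 hc)]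

lemma sq_mul_one_sub_polarInner_le {ε θ t c : ℝ} (hε : 0 ≤ ε) (hε1 : ε ≤ 1) (hθ : 0 ≤ θ)
    (hθε : 8 * θ ≤ π - ε) (ht : 0 ≤ t) (htε : 8 * t ≤ π - ε) (hc : c ≤ 1) :
    ε ^ 2 * (1 - polarInner θ t c) ≤ 1 - polarInner (8 * θ) (8 * t) c := by
  have hcos : cos (8 * θ - 8 * t) ≤ cos (θ - t) := by
    rw [← cos_abs (θ - t), ← cos_abs, ← mul_sub, abs_mul, abs_of_pos (by norm_num : (0:ℝ) < 8)]
    have : |θ - t| ≤ π / 8 := abs_sub_le_iff.2 ⟨by linarith, by linarith⟩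
    exact cos_le_cos_of_nonneg_of_le_pi (abs_nonneg _) (by linarith) (by linarith [abs_nonneg (θ - t)])
  have hsin : ε ^ 2 * (sin θ * sin t) ≤ sin (8 * θ) * sin (8 * t) := by
    have := mul_le_mul (mul_sin_le_sin_eight_mul hε hε1 hθ hθε)
      (mul_sin_le_sin_eight_mul hε hε1 ht htε)
      (mul_nonneg hε (sin_nonneg_of_nonneg_of_le_pi ht (by linarith)))
      (sin_nonneg_of_nonneg_of_le_pi (by linarith) (by linarith))
    linarith
  have hε2 : ε ^ 2 ≤ 1 := pow_le_one₀ hε hε1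
  rw [one_sub_polarInner, one_sub_polarInner]
  nlinarith [mul_le_mul_of_nonneg_right hsin (sub_nonneg.2 hc), cos_le_one (θ - t),
    mul_le_mul_of_nonneg_right hε2 (sub_nonneg.2 (cos_le_one (θ - t)))]

section Polar

variable {F : Type*} [NormedAddCommGroup F] [InnerProductSpace ℝ F] {e u v : F}

lemma inner_polar (he : ‖e‖ = 1) (hu : ⟪u, e⟫ = 0) (hv : ⟪v, e⟫ = 0) (a b : ℝ) :
    ⟪cos a • e + sin a • u, cos b • e + sin b • v⟫ = polarInner a b ⟪u, v⟫ := by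
  simp only [inner_add_left, inner_add_right, real_inner_smul_left, real_inner_smul_right,
    hu, inner_eq_zero_symm.1 hv, inner_self_eq_one_of_norm_eq_one he,
    polarInner]
  ring

lemma norm_polar_le_one (he : ‖e‖ = 1) (hu : ⟪u, e⟫ = 0) (hu1 : ‖u‖ ≤ 1) (a : ℝ) :
    ‖cos a • e + sin a • u‖ ≤ 1 := by
  have hsq := inner_polar he hu hu a a
  rw [real_inner_self_eq_norm_sq, real_inner_self_eq_norm_sq, polarInner] at hsq
  have : ‖u‖ ^ 2 ≤ 1 := pow_le_one₀ (norm_nonneg u) hu1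
  have : ‖cos a • e + sin a • u‖ ^ 2 ≤ 1 := by
    rw [hsq]; nlinarith [sin_sq_add_cos_sq a, sq_nonneg (sin a)]
  exact (sq_le_one_iff₀ (norm_nonneg _)).1 this

end Polar

section Sphere

variable {d : ℕ} {e x y : EuclideanSpace ℝ (Fin (d+1))}

lemma geo_nonneg (x y : EuclideanSpace ℝ (Fin (d+1))) : 0 ≤ geo x y := arccos_nonneg _

lemma geo_le_pi (x y : EuclideanSpace ℝ (Fin (d+1))) : geo x y ≤ π := arccos_le_pi _

lemma cos_geo (hx : ‖x‖ ≤ 1) (hy : ‖y‖ ≤ 1) : cos (geo x y) = ⟪x, y⟫ := by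
  have h : |⟪x, y⟫| ≤ 1 :=
    (abs_real_inner_le_norm x y).trans (mul_le_one₀ hx (norm_nonneg y) hy)
  exact cos_arccos (abs_le.1 h).1 (abs_le.1 h).2

/-- The horizontal direction of `x` seen from the pole `e`; it is `0` when `x = ± e`, where
`sin (geo x e) = 0`. -/
noncomputable def polarDir (e x : EuclideanSpace ℝ (Fin (d+1))) : EuclideanSpace ℝ (Fin (d+1)) :=
  (sin (geo x e))⁻¹ • (x - cos (geo x e) • e)

lemma inner_polarDir_left (he : ‖e‖ = 1) (hx : ‖x‖ = 1) : ⟪polarDir e x, e⟫ = 0 := by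
  rw [polarDir, real_inner_smul_left, inner_sub_left, real_inner_smul_left,
    inner_self_eq_one_of_norm_eq_one he, cos_geo hx.le he.le]
  ring

lemma norm_sub_cos_geo_smul (he : ‖e‖ = 1) (hx : ‖x‖ = 1) :
    ‖x - cos (geo x e) • e‖ = sin (geo x e) := by
  have hsin : 0 ≤ sin (geo x e) := sin_nonneg_of_nonneg_of_le_pi (geo_nonneg x e) (geo_le_pi x e)
  rw [← sqrt_sq hsin, ← sqrt_sq (norm_nonneg _), ← real_inner_self_eq_norm_sq]
  congr 1
  simp only [inner_sub_left, inner_sub_right, real_inner_smul_left, real_inner_smul_right,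
    real_inner_comm e, inner_self_eq_one_of_norm_eq_one he, inner_self_eq_one_of_norm_eq_one hx,
    cos_geo hx.le he.le, sin_sq]
  ring

lemma norm_polarDir_le_one (he : ‖e‖ = 1) (hx : ‖x‖ = 1) : ‖polarDir e x‖ ≤ 1 := by
  rw [polarDir, norm_smul, norm_sub_cos_geo_smul he hx, norm_inv, norm_eq_abs]
  exact inv_mul_le_one_of_le₀ (le_abs_self _) (abs_nonneg _)

lemma cos_smul_add_sin_smul_polarDir (he : ‖e‖ = 1) (hx : ‖x‖ = 1) :
    cos (geo x e) • e + sin (geo x e) • polarDir e x = x := by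
  rcases eq_or_ne (sin (geo x e)) 0 with h | h
  · have := norm_sub_cos_geo_smul he hx
    rw [h, norm_eq_zero, sub_eq_zero] at this
    rw [h, zero_smul, add_zero, ← this]
  · rw [polarDir, smul_smul, mul_inv_cancel₀ h, one_smul, add_sub_cancel]

lemma Tmap_eq_polar (e x : EuclideanSpace ℝ (Fin (d+1))) :
    Tmap e x = cos (8 * geo x e) • e + sin (8 * geo x e) • polarDir e x := by
  rw [Tmap, polarDir, smul_smul, div_eq_mul_inv]

lemma norm_Tmap_le_one (he : ‖e‖ = 1) (hx : ‖x‖ = 1) : ‖Tmap e x‖ ≤ 1 := by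
  rw [Tmap_eq_polar]
  exact norm_polar_le_one he (inner_polarDir_left he hx) (norm_polarDir_le_one he hx) _

lemma geo_Tmap_left (he : ‖e‖ = 1) (hx : ‖x‖ = 1) (hxπ : 8 * geo x e ≤ π) :
    geo (Tmap e x) e = 8 * geo x e := by
  rw [geo, Tmap_eq_polar, inner_add_left, real_inner_smul_left, real_inner_smul_left,
    inner_self_eq_one_of_norm_eq_one he, inner_polarDir_left he hx, mul_zero, add_zero, mul_one,
    arccos_cos (by linarith [geo_nonneg x e]) hxπ]

lemma inner_polarDir_le_one (he : ‖e‖ = 1) (hx : ‖x‖ = 1) (hy : ‖y‖ = 1) :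
    ⟪polarDir e x, polarDir e y⟫ ≤ 1 :=
  (real_inner_le_norm _ _).trans
    (mul_le_one₀ (norm_polarDir_le_one he hx) (norm_nonneg _) (norm_polarDir_le_one he hy))

lemma cos_geo_eq_polarInner (he : ‖e‖ = 1) (hx : ‖x‖ = 1) (hy : ‖y‖ = 1) :
    cos (geo x y) = polarInner (geo x e) (geo y e) ⟪polarDir e x, polarDir e y⟫ := by
  rw [cos_geo hx.le hy.le, ← inner_polar he (inner_polarDir_left he hx) (inner_polarDir_left he hy),
    cos_smul_add_sin_smul_polarDir he hx, cos_smul_add_sin_smul_polarDir he hy]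

lemma cos_geo_Tmap (he : ‖e‖ = 1) (hx : ‖x‖ = 1) (hy : ‖y‖ = 1) :
    cos (geo (Tmap e x) (Tmap e y)) =
      polarInner (8 * geo x e) (8 * geo y e) ⟪polarDir e x, polarDir e y⟫ := by
  rw [cos_geo (norm_Tmap_le_one he hx) (norm_Tmap_le_one he hy), Tmap_eq_polar, Tmap_eq_polar,
    inner_polar he (inner_polarDir_left he hx) (inner_polarDir_left he hy)]

lemma geo_Tmap_le_four_pi_mul (he : ‖e‖ = 1) (hx : ‖x‖ = 1) (hy : ‖y‖ = 1)
    (hxπ : 8 * geo x e ≤ π) (hyπ : 8 * geo y e ≤ π) :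
    geo (Tmap e x) (Tmap e y) ≤ 4 * π * geo x y := by
  have h := one_sub_polarInner_eight_mul_le (geo_nonneg x e) hxπ (geo_nonneg y e) hyπ
    (inner_polarDir_le_one he hx hy)
  rw [← cos_geo_Tmap he hx hy, ← cos_geo_eq_polarInner he hx hy] at h
  have := le_pi_div_two_mul_of_one_sub_cos_le (geo_nonneg (Tmap e x) (Tmap e y)) (geo_le_pi _ _)
    (geo_nonneg x y) (by norm_num : (0:ℝ) ≤ 8) (by linarith)
  linarith

lemma geo_le_pi_div_mul_geo_Tmap {ε : ℝ} (hε : 0 < ε) (hε1 : ε ≤ 1) (he : ‖e‖ = 1)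
    (hx : ‖x‖ = 1) (hy : ‖y‖ = 1) (hxε : 8 * geo x e ≤ π - ε) (hyε : 8 * geo y e ≤ π - ε) :
    geo x y ≤ π / (2 * ε) * geo (Tmap e x) (Tmap e y) := by
  have h := sq_mul_one_sub_polarInner_le hε.le hε1 (geo_nonneg x e) hxε (geo_nonneg y e) hyε
    (inner_polarDir_le_one he hx hy)
  rw [← cos_geo_Tmap he hx hy, ← cos_geo_eq_polarInner he hx hy] at h
  have h' : 1 - cos (geo x y) ≤ ε⁻¹ ^ 2 * (1 - cos (geo (Tmap e x) (Tmap e y))) := by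
    rw [inv_pow, ← div_eq_inv_mul, le_div_iff₀ (by positivity), mul_comm]; exact h
  have := le_pi_div_two_mul_of_one_sub_cos_le (geo_nonneg _ _) (geo_le_pi _ _)
    (geo_nonneg _ _) (inv_nonneg.2 hε.le) h'
  exact this.trans_eq (by ring)

lemma rhoCap_div_eight (α : ℝ) :
    rhoCap e (α / 8) x y =
      √((8 * geo x y) ^ 2 + 8 * α * (√(α / 8 - geo x e) - √(α / 8 - geo y e)) ^ 2) / α := by
  rw [rhoCap, one_div_div, div_mul_eq_mul_div]
  congr 1
  nth_rw 1 [← sqrt_sq (show (0:ℝ) ≤ 8 by norm_num)]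
  rw [← sqrt_mul (by norm_num)]
  ring_nf

lemma rhoCap_Tmap (he : ‖e‖ = 1) (hx : ‖x‖ = 1) (hy : ‖y‖ = 1) (α : ℝ)
    (hxπ : 8 * geo x e ≤ π) (hyπ : 8 * geo y e ≤ π) :
    rhoCap e α (Tmap e x) (Tmap e y) =
      √(geo (Tmap e x) (Tmap e y) ^ 2 +
        8 * α * (√(α / 8 - geo x e) - √(α / 8 - geo y e)) ^ 2) / α := by
  rw [rhoCap, geo_Tmap_left he hx hxπ, geo_Tmap_left he hy hyπ, sqrt_sub_eight_mul,
    sqrt_sub_eight_mul, ← mul_sub, mul_pow, sq_sqrt (by norm_num : (0:ℝ) ≤ 8)]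
  ring_nf

end Sphere

/-- The map T is a quasi-isometry from (B(e,α/8), ρ_{α/8}) to (B(e,α), ρ_α),
with constant depending only on d and ε. -/
theorem stmt_15 (d : ℕ) (ε : ℝ) (hε : 0 < ε) (hε' : ε < 1) :
    ∃ C₅ : ℝ, 1 ≤ C₅ ∧
    ∀ (e x y : EuclideanSpace ℝ (Fin (d+1))) (α : ℝ),
      ‖e‖ = 1 → 0 < α → α ≤ Real.pi - ε →
      ‖x‖ = 1 → geo x e ≤ α/8 → ‖y‖ = 1 → geo y e ≤ α/8 →
      C₅⁻¹ * rhoCap e (α/8) x y ≤ rhoCap e α (Tmap e x) (Tmap e y) ∧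
      rhoCap e α (Tmap e x) (Tmap e y) ≤ C₅ * rhoCap e (α/8) x y := by
  have hK : 1 ≤ 4 * π / ε := by rw [le_div_iff₀ hε]; linarith [pi_gt_three]
  refine ⟨4 * π / ε, hK, fun e x y α he hα hαε hx hxα hy hyα => ?_⟩
  have hxε : 8 * geo x e ≤ π - ε := by linarith
  have hyε : 8 * geo y e ≤ π - ε := by linarith
  rw [rhoCap_Tmap he hx hy α (by linarith) (by linarith), rhoCap_div_eight]
  have hw : 0 ≤ 8 * α * (√(α / 8 - geo x e) - √(α / 8 - geo y e)) ^ 2 := by positivity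
  constructor
  · rw [← mul_div_assoc, div_le_div_iff_of_pos_right hα, inv_mul_le_iff₀ (by positivity)]
    refine sqrt_sq_add_le_mul_sqrt_sq_add hK (by linarith [geo_nonneg x y]) hw ?_
    have := geo_le_pi_div_mul_geo_Tmap hε hε'.le he hx hy hxε hyε
    calc 8 * geo x y ≤ 8 * (π / (2 * ε) * geo (Tmap e x) (Tmap e y)) := by gcongr
      _ = 4 * π / ε * geo (Tmap e x) (Tmap e y) := by field_simp; ring
  · rw [← mul_div_assoc, div_le_div_iff_of_pos_right hα]
    refine sqrt_sq_add_le_mul_sqrt_sq_add hK (geo_nonneg _ _) hw ?_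
    calc geo (Tmap e x) (Tmap e y) ≤ 4 * π * geo x y :=
          geo_Tmap_le_four_pi_mul he hx hy (by linarith) (by linarith)
      _ ≤ 4 * π / ε * (8 * geo x y) := by
          rw [div_mul_eq_mul_div, le_div_iff₀ hε]
          nlinarith [mul_le_mul_of_nonneg_left (by linarith : ε ≤ 8)
            (mul_nonneg (by positivity : (0:ℝ) ≤ 4 * π) (geo_nonneg x y))]
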